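/- Let q₁,…,q_N and d₁,…,d_N be points in ℝⁿ and suppose the identity permutation minimizes Σᵢ ‖qᵢ − d_{σ(i)}‖² over all permutations σ. For λ ∈ [0,1] define qᵢ(λ) = (1−λ)qᵢ + λ dᵢ. Then for every λ ∈ [0,1], the identity permutation still minimizes Σᵢ ‖qᵢ(λ) − d_{σ(i)}‖² over all permutations σ. -/
import Mathlib

lemma seg_norm_sq {E : Type*} [NormedAddCommGroup E] [InnerProductSpace ℝ E]
    (q d y : E) (lam : ℝ) :
    ‖((1 - lam) • q + lam • d) - y‖ ^ 2
      = (1 - lam) * ‖q - y‖ ^ 2 + lam * ‖d - y‖ ^ 2 - lam * (1 - lam) * ‖q - d‖ ^ 2 := by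
  have h : ((1 - lam) • q + lam • d) - y = (1 - lam) • (q - y) + lam • (d - y) := by
    module
  rw [h, norm_add_sq_real]
  have hqd : q - d = (q - y) - (d - y) := by abel
  rw [hqd, norm_sub_sq_real (q - y) (d - y)]
  rw [real_inner_smul_left, real_inner_smul_right, norm_smul, norm_smul]
  simp only [Real.norm_eq_abs]
  rw [mul_pow, mul_pow, sq_abs, sq_abs]
  ring

theorem optimal_assignment_invariant {n N : ℕ}
    (q d : Fin N → EuclideanSpace ℝ (Fin n))
    (hopt : ∀ σ : Equiv.Perm (Fin N),
      ∑ i, ‖q i - d i‖ ^ 2 ≤ ∑ i, ‖q i - d (σ i)‖ ^ 2)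
    (lam : ℝ) (hlam : lam ∈ Set.Icc (0 : ℝ) 1) :
    ∀ σ : Equiv.Perm (Fin N),
      ∑ i, ‖((1 - lam) • q i + lam • d i) - d i‖ ^ 2
        ≤ ∑ i, ‖((1 - lam) • q i + lam • d i) - d (σ i)‖ ^ 2 := by
  obtain ⟨h0, h1⟩ := hlam
  intro σ
  have key : ∀ i, ‖((1 - lam) • q i + lam • d i) - d (σ i)‖ ^ 2
      = (1 - lam) * ‖q i - d (σ i)‖ ^ 2 + lam * ‖d i - d (σ i)‖ ^ 2
        - lam * (1 - lam) * ‖q i - d i‖ ^ 2 := fun i => seg_norm_sq _ _ _ _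
  have key' : ∀ i, ‖((1 - lam) • q i + lam • d i) - d i‖ ^ 2
      = (1 - lam) ^ 2 * ‖q i - d i‖ ^ 2 := by
    intro i
    rw [seg_norm_sq]
    simp
    ring
  simp only [key, key']
  rw [Finset.sum_sub_distrib, Finset.sum_add_distrib, ← Finset.mul_sum, ← Finset.mul_sum, ← Finset.mul_sum,
    ← Finset.mul_sum]
  have hA : ∑ i, ‖q i - d i‖ ^ 2 ≤ ∑ i, ‖q i - d (σ i)‖ ^ 2 := hopt σ
  have hB : (0 : ℝ) ≤ ∑ i, ‖d i - d (σ i)‖ ^ 2 :=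
    Finset.sum_nonneg fun i _ => sq_nonneg _
  nlinarith [mul_nonneg (sub_nonneg.2 h1) (sub_nonneg.2 hA), mul_nonneg h0 hB]
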